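/- arXiv:2310.17067 — 2 statements merged into one kernel-verified Lean document; each statement's English description precedes it below -/
import Mathlib

section
/- Let Ω ⊆ ℍ be an axially symmetric s-domain and (i,j) a pair of orthogonal pure imaginary unit quaternions. Then P_{i,j} ∘ Q_{i,j} is the identity on the slice regular functions on Ω, and Q_{i,j} ∘ P_{i,j} is the identity on Hol(Ω_i) + Hol(Ω_i)j. Explicitly: (a) for every slice regular f : Ω → ℍ and every q = x + I_q y ∈ Ω (x, y ∈ ℝ, I_q ∈ 𝕊²), ½[(1 + I_q i) f(x − y i) + (1 − I_q i) f(x + y i)] = f(q); (b) for every g = g₁ + g₂ j with g₁, g₂ holomorphic on Ω_i = Ω ∩ ℂ(i) (with values in ℂ(i)), the restriction of P_{i,j}[g] to Ω_i equals g, where P_{i,j}[g](x + I_q y) := ½[(1 + I_q i) g(x − y i) + (1 − I_q i) g(x + y i)]. -/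
noncomputable section

open MeasureTheory Filter

notation "ℍ" => Quaternion ℝ

/-- The set of pure imaginary unit quaternions `𝕊²`. -/
def Sph2 (i : ℍ) : Prop := i.re = 0 ∧ ‖i‖ = 1

/-- Ordered pairs of orthogonal pure imaginary unit quaternions (the set `T`). -/
def OrthPair (i j : ℍ) : Prop := Sph2 i ∧ Sph2 j ∧ (i * star j).re = 0

/-- The slice complex plane `ℂ(i) = {x + y i}`. -/
def CC (i : ℍ) : Set ℍ := {q | ∃ x y : ℝ, q = (x : ℍ) + y • i}

/-- Slice regularity of `f` on `Ω`: real differentiability together with the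
Cauchy–Riemann condition `½(∂/∂x + i ∂/∂y) f = 0` on every slice. -/
def SliceRegularOn (f : ℍ → ℍ) (Ω : Set ℍ) : Prop :=
  ∀ ⦃i : ℍ⦄, Sph2 i → ∀ x y : ℝ, ((x : ℍ) + y • i) ∈ Ω →
    DifferentiableAt ℝ f ((x : ℍ) + y • i) ∧
    fderiv ℝ f ((x : ℍ) + y • i) 1 + i * fderiv ℝ f ((x : ℍ) + y • i) i = 0

/-- Axially symmetric slice domain. -/
structure AxSymSDomain (Ω : Set ℍ) : Prop where
  isOpen : IsOpen Ω
  isConnected : IsConnected Ω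
  real_nonempty : (Ω ∩ Set.range ((↑) : ℝ → ℍ)).Nonempty
  slice_connected : ∀ ⦃i : ℍ⦄, Sph2 i →
    IsConnected {p : ℝ × ℝ | ((p.1 : ℍ) + p.2 • i) ∈ Ω}
  axial : ∀ (x y : ℝ) ⦃i : ℍ⦄, Sph2 i → ((x : ℍ) + y • i) ∈ Ω →
    ∀ ⦃j : ℍ⦄, Sph2 j → ((x : ℍ) + y • j) ∈ Ω

/-- The slice `Ω ∩ ℂ(i)` as a subset of `ℝ²`. -/
def sliceSet (Ω : Set ℍ) (i : ℍ) : Set (ℝ × ℝ) := {p | ((p.1 : ℍ) + p.2 • i) ∈ Ω}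

/-- `‖f‖²_{A_i(Ω)} = ∫_{Ω ∩ ℂ(i)} ‖f‖² dσ_i`. -/
def bergmanNormSq (Ω : Set ℍ) (i : ℍ) (f : ℍ → ℍ) : ℝ :=
  ∫ p in sliceSet Ω i, ‖f ((p.1 : ℍ) + p.2 • i)‖ ^ 2

/-- The slice regular Bergman norm `‖f‖_{A_i(Ω)}`. -/
def bergmanNorm (Ω : Set ℍ) (i : ℍ) (f : ℍ → ℍ) : ℝ :=
  Real.sqrt (bergmanNormSq Ω i f)

/-- Membership in the slice regular Bergman space `A_i(Ω)`. -/
def MemBergman (Ω : Set ℍ) (i : ℍ) (f : ℍ → ℍ) : Prop :=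
  SliceRegularOn f Ω ∧
  IntegrableOn (fun p : ℝ × ℝ => ‖f ((p.1 : ℍ) + p.2 • i)‖ ^ 2) (sliceSet Ω i)

/-- The quaternionic Bergman inner product `⟨f,g⟩ = ∫ conj(f) g dσ_i`. -/
def bergmanInner (Ω : Set ℍ) (i : ℍ) (f g : ℍ → ℍ) : ℍ :=
  ∫ p in sliceSet Ω i, star (f ((p.1 : ℍ) + p.2 • i)) * g ((p.1 : ℍ) + p.2 • i)

/-- The open unit ball `𝔹⁴ ⊆ ℍ`. -/
def B4 : Set ℍ := {q | ‖q‖ < 1}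

/-- The open unit disk `D ⊆ ℝ²`. -/
def unitDisk : Set (ℝ × ℝ) := {p | p.1 ^ 2 + p.2 ^ 2 < 1}

/-- `‖f‖²_{A_i(𝔹⁴)} = ∫_D ‖f(x + yi)‖² dμ(x,y)`. -/
def bergNormSqB (i : ℍ) (f : ℍ → ℍ) : ℝ :=
  ∫ p in unitDisk, ‖f ((p.1 : ℍ) + p.2 • i)‖ ^ 2

/-- The Bergman norm on `A_i(𝔹⁴)`. -/
def bergNormB (i : ℍ) (f : ℍ → ℍ) : ℝ := Real.sqrt (bergNormSqB i f)

/-- Membership in `A_i(𝔹⁴)`. -/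
def MemBergB (i : ℍ) (f : ℍ → ℍ) : Prop :=
  SliceRegularOn f B4 ∧
  IntegrableOn (fun p : ℝ × ℝ => ‖f ((p.1 : ℍ) + p.2 • i)‖ ^ 2) unitDisk

open Classical in
/-- `I_q`: the imaginary unit direction of `q` (an arbitrary fixed unit when `q` is real). -/
def Imu (q : ℍ) : ℍ := if q.im = 0 then ⟨0, 1, 0, 0⟩ else ‖q.im‖⁻¹ • q.im

/-- The extension operator `P_{k,·}`: for a slice function `g : ℝ² → ℍ` (representing
`x + y k ↦ g(x,y)`), `Pext k g (q) = ½[(1 + I_q k) g(x, −y) + (1 − I_q k) g(x, y)]`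
where `q = x + I_q y`, `y = ‖im q‖ ≥ 0`. -/
def Pext (k : ℍ) (g : ℝ × ℝ → ℍ) (q : ℍ) : ℍ :=
  (2⁻¹ : ℝ) • ((1 + Imu q * k) * g (q.re, -‖q.im‖) + (1 - Imu q * k) * g (q.re, ‖q.im‖))

/-- The slice function `x + y k ↦ a + b k + c l + d kl`. -/
def sliceFun (a b c d : ℝ × ℝ → ℝ) (k l : ℍ) (p : ℝ × ℝ) : ℍ :=
  (a p : ℍ) + b p • k + c p • l + d p • (k * l)

/-- `L²(D)` norm of a real function on the unit disk. -/
def L2D (a : ℝ × ℝ → ℝ) : ℝ := Real.sqrt (∫ p in unitDisk, a p ^ 2)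

/-- Finiteness of the `L²(D)` norm. -/
def MemL2D (a : ℝ × ℝ → ℝ) : Prop := IntegrableOn (fun p => a p ^ 2) unitDisk

/-- Harmonicity on the unit disk: `a` is `C²` and `∂²a/∂x² + ∂²a/∂y² = 0`. -/
def HarmonicOnDisk (a : ℝ × ℝ → ℝ) : Prop :=
  ContDiffOn ℝ 2 a unitDisk ∧ ∀ p ∈ unitDisk,
    fderiv ℝ (fun q => fderiv ℝ a q (1, 0)) p (1, 0)
      + fderiv ℝ (fun q => fderiv ℝ a q (0, 1)) p (0, 1) = 0

/-- `(a,b)` is a pair of conjugate harmonic functions on `D`: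
both harmonic and satisfying the Cauchy–Riemann equations. -/
def ConjHarmPair (a b : ℝ × ℝ → ℝ) : Prop :=
  HarmonicOnDisk a ∧ HarmonicOnDisk b ∧
  ∀ p ∈ unitDisk,
    fderiv ℝ a p (1, 0) = fderiv ℝ b p (0, 1) ∧
    fderiv ℝ a p (0, 1) = -fderiv ℝ b p (1, 0)

/-- `(a,b) ∈ HL²(D)`. -/
def HLpair (a b : ℝ × ℝ → ℝ) : Prop := ConjHarmPair a b ∧ MemL2D a ∧ MemL2D b

/-- Raw data of an element of `HL(D)`: a 2×2 matrix `(a b; c d)` of real functions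
on the disk together with a pair `(k,l)` of quaternions. -/
structure HLElem where
  a : ℝ × ℝ → ℝ
  b : ℝ × ℝ → ℝ
  c : ℝ × ℝ → ℝ
  d : ℝ × ℝ → ℝ
  k : ℍ
  l : ℍ

/-- Membership in `HL(D)`: `(a,b),(c,d) ∈ HL²(D)` and `(k,l) ∈ T`. -/
def HLElem.mem (A : HLElem) : Prop := HLpair A.a A.b ∧ HLpair A.c A.d ∧ OrthPair A.k A.l

/-- The bundle projection `P_{𝔹⁴}((a b; c d),(k,l)) = P_{k,l}[a + bk + cl + dkl]`. -/
def HLElem.proj (A : HLElem) : ℍ → ℍ := Pext A.k (sliceFun A.a A.b A.c A.d A.k A.l)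

/-- The metric of `HL(D)`. -/
def HLdist (A B : HLElem) : ℝ :=
  L2D (A.a - B.a) + L2D (A.b - B.b) + L2D (A.c - B.c) + L2D (A.d - B.d)
    + Real.sqrt (‖A.k - B.k‖ ^ 2 + ‖A.l - B.l‖ ^ 2)

/-- `Q_{k,l}[f] : (x,y) ↦ f(x + y k)`, the restriction of `f` to the slice `ℂ(k)`. -/
def Qsl (f : ℍ → ℍ) (k : ℍ) (p : ℝ × ℝ) : ℍ := f ((p.1 : ℍ) + p.2 • k)

/-- `D₁[f,k,l] = (Q[f] + conj(Q[f]))/2 = Re (Q[f])`. -/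
def Dc1 (f : ℍ → ℍ) (k _l : ℍ) (p : ℝ × ℝ) : ℝ := (Qsl f k p).re

/-- `D₂[f,k,l] = −(Q[f]·k + conj(Q[f]·k))/2 = −Re (Q[f]·k)`. -/
def Dc2 (f : ℍ → ℍ) (k _l : ℍ) (p : ℝ × ℝ) : ℝ := -(Qsl f k p * k).re

/-- `D₃[f,k,l] = −(Q[f]·l + conj(Q[f]·l))/2 = −Re (Q[f]·l)`. -/
def Dc3 (f : ℍ → ℍ) (k l : ℍ) (p : ℝ × ℝ) : ℝ := -(Qsl f k p * l).re

/-- `D₄[f,k,l] = (Q[f]·lk + conj(Q[f]·lk))/2 = Re (Q[f]·(lk))`. -/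
def Dc4 (f : ℍ → ℍ) (k l : ℍ) (p : ℝ × ℝ) : ℝ := (Qsl f k p * (l * k)).re

/-- The section map `S_{k,l}[f] = ((D₁ D₂; D₃ D₄), (k,l))`. -/
def Smap (f : ℍ → ℍ) (k l : ℍ) : HLElem :=
  ⟨Dc1 f k l, Dc2 f k l, Dc3 f k l, Dc4 f k l, k, l⟩

/-- The metric `ρ_i` on `A_i(𝔹⁴) × T`. -/
def rhoA (i : ℍ) (f : ℍ → ℍ) (k l : ℍ) (g : ℍ → ℍ) (m n : ℍ) : ℝ :=
  bergNormB i (f - g) + Real.sqrt (‖k - m‖ ^ 2 + ‖l - n‖ ^ 2)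

/-!
Write `z_k = Re z + (Im z) k` for `z ∈ ℂ`. The difference
`H(z) = ½[(1 + I i) f(z_{-i}) + (1 − I i) f(z_i)] − f(z_I)` is holomorphic for the complex structure
on `ℍ` given by left multiplication by `I`: each `f(z_k)` is holomorphic for `k` by slice regularity,
and the coefficients intertwine the structures, `(1 + I i)(−i) = I(1 + I i)`, `(1 − I i) i = I(1 − I i)`.
Since `H` vanishes on the real axis, which meets the connected slice `Ω_I`, the identity principle
gives `H ≡ 0` there. The second identity is the case `I = i`, where the formula collapses by `i² = −1`.
-/

open Topology

namespace Sph2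

variable {I : ℍ} (hI : Sph2 I)
include hI

lemma star_eq_neg : star I = -I := by ext <;> simp [hI.1]

lemma mul_self : I * I = -1 := by
  have h := Quaternion.self_mul_star I
  rw [hI.star_eq_neg, mul_neg, Quaternion.normSq_eq_norm_mul_self, hI.2, mul_one] at h
  exact neg_eq_iff_eq_neg.mp h

lemma neg : Sph2 (-I) := ⟨by simp [hI.1], by simp [hI.2]⟩

lemma norm_liftAux (z : ℂ) : ‖Complex.liftAux I hI.mul_self z‖ = ‖z‖ := by
  have h : Quaternion.normSq (Complex.liftAux I hI.mul_self z) = Complex.normSq z := by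
    rw [Complex.liftAux_apply, Quaternion.normSq_add]
    simp [Quaternion.normSq_smul, Quaternion.normSq_eq_norm_mul_self, hI.2, hI.1,
      Complex.normSq_apply, sq]
  rw [norm_eq_sqrt_real_inner, Quaternion.inner_self, h, Complex.norm_def]

lemma one_add_mul_mul_neg {i : ℍ} (hi : Sph2 i) : (1 + I * i) * -i = I * (1 + I * i) := by
  have hI2 := hI.mul_self
  have hi2 := hi.mul_self
  calc (1 + I * i) * -i = I - i - I * (i * i + 1) := by noncomm_ring
    _ = I - i + (I * I + 1) * i := by rw [hi2, hI2]; noncomm_ring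
    _ = I * (1 + I * i) := by noncomm_ring

lemma one_sub_mul_mul {i : ℍ} (hi : Sph2 i) : (1 - I * i) * i = I * (1 - I * i) := by
  have hI2 := hI.mul_self
  have hi2 := hi.mul_self
  calc (1 - I * i) * i = I + i - I * (i * i + 1) := by noncomm_ring
    _ = I + i - (I * I + 1) * i := by rw [hi2, hI2]; noncomm_ring
    _ = I * (1 - I * i) := by noncomm_ring

end Sph2

lemma Quaternion.inv_two_smul_two_mul (a : ℍ) : (2⁻¹ : ℝ) • (2 * a) = a := by
  rw [two_mul, ← two_smul ℝ a, inv_smul_smul₀ two_ne_zero]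

def sliceCLM (k : ℍ) : ℂ →L[ℝ] ℍ :=
  Complex.reCLM.smulRight 1 + Complex.imCLM.smulRight k

@[simp]
lemma sliceCLM_apply (k : ℍ) (z : ℂ) : sliceCLM k z = (z.re : ℍ) + z.im • k := by
  simp [sliceCLM, ← Quaternion.coe_mul_eq_smul]

lemma sliceCLM_ofReal (k : ℍ) (t : ℝ) : sliceCLM k t = t := by simp

lemma Complex.frequently_nhdsNE_ofReal {p : ℂ → Prop} {x : ℝ} (h : ∀ᶠ t : ℝ in 𝓝 x, p t) :
    ∃ᶠ z in 𝓝[≠] (x : ℂ), p z := by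
  have hT : Tendsto ((↑) : ℝ → ℂ) (𝓝[≠] x) (𝓝[≠] (x : ℂ)) :=
    Complex.continuous_ofReal.continuousWithinAt.tendsto_nhdsWithin
      fun _ => mt Complex.ofReal_inj.mp
  exact hT.frequently (h.filter_mono nhdsWithin_le_nhds).frequently

lemma AxSymSDomain.isPreconnected_preimage_sliceCLM {Ω : Set ℍ} (hΩ : AxSymSDomain Ω) {I : ℍ}
    (hI : Sph2 I) : IsPreconnected (sliceCLM I ⁻¹' Ω) := by
  have hU : sliceCLM I ⁻¹' Ω = Complex.equivRealProdCLM ⁻¹' {p | (p.1 : ℍ) + p.2 • I ∈ Ω} := by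
    ext; simp
  rw [hU]
  exact Complex.equivRealProdCLM.toHomeomorph.isPreconnected_preimage.2
    (hΩ.slice_connected hI).isPreconnected

/-- Holomorphy of `H : ℂ → ℍ` at `z` when `ℍ` is a complex vector space through left multiplication
by `ℂ(I)`: the real differential commutes with the two complex structures. -/
def HolomorphicAtWrt (I : ℍ) (H : ℂ → ℍ) (z : ℂ) : Prop :=
  DifferentiableAt ℝ H z ∧ fderiv ℝ H z Complex.I = I * fderiv ℝ H z 1

namespace HolomorphicAtWrt

variable {I : ℍ} {F G : ℂ → ℍ} {z : ℂ}

lemma add (hF : HolomorphicAtWrt I F z) (hG : HolomorphicAtWrt I G z) :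
    HolomorphicAtWrt I (fun w => F w + G w) z := by
  refine ⟨hF.1.add hG.1, ?_⟩
  simp only [fderiv_fun_add hF.1 hG.1, add_apply, hF.2, hG.2, mul_add]

lemma sub (hF : HolomorphicAtWrt I F z) (hG : HolomorphicAtWrt I G z) :
    HolomorphicAtWrt I (fun w => F w - G w) z := by
  refine ⟨hF.1.sub hG.1, ?_⟩
  simp only [fderiv_fun_sub hF.1 hG.1, sub_apply, hF.2, hG.2, mul_sub]

lemma const_smul (r : ℝ) (hF : HolomorphicAtWrt I F z) :
    HolomorphicAtWrt I (fun w => r • F w) z := by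
  refine ⟨hF.1.const_smul r, ?_⟩
  simp only [fderiv_fun_const_smul hF.1, smul_apply, hF.2, mul_smul_comm]

lemma const_mul {k : ℍ} (a : ℍ) (ha : a * k = I * a) (hF : HolomorphicAtWrt k F z) :
    HolomorphicAtWrt I (fun w => a * F w) z := by
  refine ⟨hF.1.const_mul a, ?_⟩
  simp only [fderiv_const_mul hF.1, smul_apply, smul_eq_mul, hF.2, ← mul_assoc, ha]

lemma eqOn_zero_of_preconnected_of_frequently_eq_zero (hI : Sph2 I) {U : Set ℂ}
    (hU : IsOpen U) (hUc : IsPreconnected U) (hF : ∀ z ∈ U, HolomorphicAtWrt I F z)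
    {z₀ : ℂ} (hz₀ : z₀ ∈ U) (hfreq : ∃ᶠ z in 𝓝[≠] z₀, F z = 0) : Set.EqOn F 0 U := by
  let φ := Complex.liftAux I hI.mul_self
  let _ : Module ℂ ℍ := Module.compHom ℍ φ.toRingHom
  have hsmul : ∀ (w : ℂ) (q : ℍ), w • q = φ w * q := fun _ _ => rfl
  have : IsScalarTower ℝ ℂ ℍ :=
    ⟨fun r w q => by rw [hsmul, hsmul, map_smul, smul_mul_assoc]⟩
  let _ : NormedSpace ℂ ℍ := ⟨fun w q => by rw [hsmul, norm_mul, hI.norm_liftAux]⟩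
  have hdiff : DifferentiableOn ℂ F U := by
    intro z hz
    obtain ⟨hd, hcr⟩ := hF z hz
    let L : ℂ →L[ℂ] ℍ := (1 : ℂ →L[ℂ] ℂ).smulRight (fderiv ℝ F z 1)
    have hL : L.restrictScalars ℝ = fderiv ℝ F z := by
      ext1 w
      have hw : w = w.re • (1 : ℂ) + w.im • Complex.I := by apply Complex.ext <;> simp
      conv_rhs => rw [hw, map_add, map_smul, map_smul, hcr]
      simp [L, hsmul, φ, Complex.liftAux_apply, add_mul, Quaternion.coe_mul_eq_smul]
    exact (hasFDerivAt_of_restrictScalars ℝ hd.hasFDerivAt hL).differentiableAt.differentiableWithinAt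
  exact (hdiff.analyticOnNhd hU).eqOn_zero_of_preconnected_of_frequently_eq_zero hUc hz₀ hfreq

end HolomorphicAtWrt

lemma SliceRegularOn.holomorphicAtWrt_comp_sliceCLM {f : ℍ → ℍ} {Ω : Set ℍ}
    (hf : SliceRegularOn f Ω) {k : ℍ} (hk : Sph2 k) {z : ℂ} (hz : sliceCLM k z ∈ Ω) :
    HolomorphicAtWrt k (fun w => f (sliceCLM k w)) z := by
  rw [sliceCLM_apply] at hz
  obtain ⟨hd, hcr⟩ := hf hk z.re z.im hz
  rw [← sliceCLM_apply] at hd hcr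
  have hderiv : HasFDerivAt (fun w => f (sliceCLM k w))
      ((fderiv ℝ f (sliceCLM k z)).comp (sliceCLM k)) z :=
    hd.hasFDerivAt.comp z (sliceCLM k).hasFDerivAt
  have hone : sliceCLM k 1 = 1 := by simp
  have hI : sliceCLM k Complex.I = k := by simp
  refine ⟨hderiv.differentiableAt, ?_⟩
  rw [hderiv.fderiv, ContinuousLinearMap.comp_apply, ContinuousLinearMap.comp_apply, hone, hI,
    eq_neg_of_add_eq_zero_left hcr, mul_neg, ← mul_assoc, hk.mul_self, neg_one_mul, neg_neg]

theorem SliceRegularOn.representation_formula {Ω : Set ℍ} (hΩ : AxSymSDomain Ω) {f : ℍ → ℍ}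
    (hf : SliceRegularOn f Ω) {i : ℍ} (hi : Sph2 i) {I : ℍ} (hI : Sph2 I) {x y : ℝ}
    (hq : (x : ℍ) + y • I ∈ Ω) :
    (2⁻¹ : ℝ) • ((1 + I * i) * f ((x : ℍ) - y • i) + (1 - I * i) * f ((x : ℍ) + y • i))
      = f ((x : ℍ) + y • I) := by
  set U := sliceCLM I ⁻¹' Ω
  set H : ℂ → ℍ := fun z => (2⁻¹ : ℝ) • ((1 + I * i) * f (sliceCLM (-i) z)
    + (1 - I * i) * f (sliceCLM i z)) - f (sliceCLM I z)
  have hmem {k : ℍ} (hk : Sph2 k) {z : ℂ} (hz : z ∈ U) : sliceCLM k z ∈ Ω := by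
    simpa using hΩ.axial z.re z.im hI (by simpa [U] using hz) hk
  have hH : ∀ z ∈ U, HolomorphicAtWrt I H z := fun z hz =>
    ((((hf.holomorphicAtWrt_comp_sliceCLM hi.neg (hmem hi.neg hz)).const_mul _
      (hI.one_add_mul_mul_neg hi)).add
      ((hf.holomorphicAtWrt_comp_sliceCLM hi (hmem hi hz)).const_mul _
      (hI.one_sub_mul_mul hi))).const_smul _).sub
      (hf.holomorphicAtWrt_comp_sliceCLM hI (hmem hI hz))
  have hH_ofReal (t : ℝ) : H t = 0 := by
    simp only [H, sliceCLM_ofReal, ← add_mul, add_add_sub_cancel, one_add_one_eq_two,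
      Quaternion.inv_two_smul_two_mul, sub_self]
  obtain ⟨_, hx₀Ω, x₀, rfl⟩ := hΩ.real_nonempty
  have hx₀ : (x₀ : ℂ) ∈ U := by simpa [U] using hx₀Ω
  have hfreq : ∃ᶠ z in 𝓝[≠] (x₀ : ℂ), H z = 0 :=
    Complex.frequently_nhdsNE_ofReal (Filter.Eventually.of_forall hH_ofReal)
  have hU : IsOpen U := hΩ.isOpen.preimage (sliceCLM I).continuous
  have hzero := HolomorphicAtWrt.eqOn_zero_of_preconnected_of_frequently_eq_zero hI hU
    (hΩ.isPreconnected_preimage_sliceCLM hI) hH hx₀ hfreq (show ⟨x, y⟩ ∈ U by simpa [U] using hq)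
  rw [Pi.zero_apply, sub_eq_zero] at hzero
  simpa [sub_eq_add_neg] using hzero

/-- `P_{i,j} ∘ Q_{i,j}` is the identity on the slice regular functions on `Ω`, and
`Q_{i,j} ∘ P_{i,j}` is the identity on `Hol(Ω_i) + Hol(Ω_i) j`. -/
theorem P_Q_identities (Ω : Set ℍ) (hΩ : AxSymSDomain Ω)
    (i j : ℍ) (hij : OrthPair i j) :
    (∀ f : ℍ → ℍ, SliceRegularOn f Ω →
      ∀ (x y : ℝ) (I : ℍ), Sph2 I → ((x : ℍ) + y • I) ∈ Ω →
        (2⁻¹ : ℝ) • ((1 + I * i) * f ((x : ℍ) - y • i)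
            + (1 - I * i) * f ((x : ℍ) + y • i))
          = f ((x : ℍ) + y • I)) ∧
    (∀ g g₁ g₂ : ℍ → ℍ,
      (∀ z ∈ Ω ∩ CC i,
        g₁ z ∈ CC i ∧ g₂ z ∈ CC i ∧
        DifferentiableAt ℝ g₁ z ∧
        fderiv ℝ g₁ z 1 + i * fderiv ℝ g₁ z i = 0 ∧
        DifferentiableAt ℝ g₂ z ∧
        fderiv ℝ g₂ z 1 + i * fderiv ℝ g₂ z i = 0 ∧
        g z = g₁ z + g₂ z * j) →
      ∀ x y : ℝ, ((x : ℍ) + y • i) ∈ Ω →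
        (2⁻¹ : ℝ) • ((1 + i * i) * g ((x : ℍ) - y • i)
            + (1 - i * i) * g ((x : ℍ) + y • i))
          = g ((x : ℍ) + y • i)) := by
  refine ⟨fun f hf x y I hI hq => hf.representation_formula hΩ hij.1 hI hq, ?_⟩
  intro g _ _ _ x y _
  rw [hij.1.mul_self, add_neg_cancel, zero_mul, zero_add, sub_neg_eq_add, one_add_one_eq_two,
    Quaternion.inv_two_smul_two_mul]
end
end

section
/- Let (k,l) be a pair of orthogonal pure imaginary unit quaternions and let (a,b) and (c,d) be pairs of real-valued conjugate harmonic functions on the unit disk D with finite L²(D) norms. Then the function P_{k,l}[a + bk + cl + dkl] is slice regular on 𝔹⁴. -/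
noncomputable section

open MeasureTheory Filter

/-!
On the slice `ℂ(i)` the extension is `P[g](x + y i) = ½((1 + i k) g(x, -y) + (1 - i k) g(x, y))`.
Writing `a + b k + c l + d k l = (a + b k) + (c + d k) l`, the Cauchy–Riemann equations of the two
pairs say `∂ₓg + k ∂ᵧg = 0`. The reflection `y ↦ -y` turns this into the same equation for `-k`,
and the identities `i (1 + i k) = (1 + i k) (-k)` and `i (1 - i k) = (1 - i k) k` let left
multiplication by `1 ± i k` carry both into `∂ₓ + i ∂ᵧ = 0` on `ℂ(i)`.

Real differentiability on `𝔹⁴` is clear off the real axis, where `I_q` is smooth. At a real point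
`x₀` the extension reproduces affine functions of `(x, y)` and is bounded by `1 + ‖k‖` times the
values of `g` at `(Re q, ±‖Im q‖)`, so its first-order remainder is controlled by that of `g`
at `(x₀, 0)`.
-/

open Topology Asymptotics

lemma isLittleO_comp_of_norm_sub_le {E F G : Type*} [NormedAddCommGroup E]
    [NormedAddCommGroup F] [NormedAddCommGroup G] {R : F → G} {φ : E → F} {x₀ : E} {p₀ : F}
    (hR : R =o[𝓝 p₀] fun p => p - p₀) (hφ : ∀ x, ‖φ x - p₀‖ ≤ ‖x - x₀‖) :
    (fun x => R (φ x)) =o[𝓝 x₀] fun x => x - x₀ := by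
  have hO : (fun x => φ x - p₀) =O[𝓝 x₀] fun x => x - x₀ :=
    IsBigO.of_bound 1 (Eventually.of_forall fun x => by simpa using hφ x)
  have hlim : Tendsto φ (𝓝 x₀) (𝓝 p₀) :=
    tendsto_sub_nhds_zero_iff.1 (hO.trans_tendsto (tendsto_sub_nhds_zero_iff.2 tendsto_id))
  exact (hR.comp_tendsto hlim).trans_isBigO hO

def Quaternion.reCLM : ℍ →L[ℝ] ℝ := LinearMap.toContinuousLinearMap (QuaternionAlgebra.reₗ _ _ _)

def Quaternion.imCLM : ℍ →L[ℝ] ℍ := LinearMap.toContinuousLinearMap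
  { toFun := Quaternion.im, map_add' := Quaternion.im_add,
    map_smul' := fun r a => Quaternion.im_smul a r }

@[simp] lemma Quaternion.reCLM_apply (q : ℍ) : reCLM q = q.re := rfl

@[simp] lemma Quaternion.imCLM_apply (q : ℍ) : imCLM q = q.im := rfl

lemma Quaternion.coe_eq_smul_one (r : ℝ) : (r : ℍ) = r • 1 := by
  rw [← coe_mul_eq_smul, mul_one]

lemma Quaternion.im_eq_self {i : ℍ} (hi : i.re = 0) : i.im = i := by
  simpa [hi] using re_add_im i

lemma Quaternion.norm_sq_eq_re_sq_add_norm_im_sq (q : ℍ) : ‖q‖ ^ 2 = q.re ^ 2 + ‖q.im‖ ^ 2 := by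
  simp only [sq, ← normSq_eq_norm_mul_self, normSq_def', re_im, imI_im, imJ_im, imK_im, mul_zero,
    zero_add]
  ring

lemma Quaternion.abs_re_le_norm (q : ℍ) : |q.re| ≤ ‖q‖ :=
  abs_le_of_sq_le_sq (by nlinarith [norm_sq_eq_re_sq_add_norm_im_sq q]) (norm_nonneg q)

lemma Quaternion.norm_im_le_norm (q : ℍ) : ‖q.im‖ ≤ ‖q‖ :=
  abs_norm q.im ▸
    abs_le_of_sq_le_sq (by nlinarith [norm_sq_eq_re_sq_add_norm_im_sq q]) (norm_nonneg q)

lemma Sph2.ne_zero {i : ℍ} (hi : Sph2 i) : i ≠ 0 := by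
  rintro rfl
  simpa using hi.2

lemma Sph2.mul_self_s8 {i : ℍ} (hi : Sph2 i) : i * i = -1 := by
  rw [← sq, Quaternion.sq_eq_neg_normSq.2 hi.1, Quaternion.normSq_eq_norm_mul_self, hi.2]
  simp

lemma re_coe_add_smul (x y : ℝ) {i : ℍ} (hi : i.re = 0) : ((x : ℍ) + y • i).re = x := by
  simp [hi]

lemma im_coe_add_smul (x y : ℝ) {i : ℍ} (hi : i.re = 0) : ((x : ℍ) + y • i).im = y • i := by
  simp [Quaternion.im_eq_self hi]

lemma norm_im_coe_add_smul (x y : ℝ) {i : ℍ} (hi : Sph2 i) : ‖((x : ℍ) + y • i).im‖ = |y| := by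
  rw [im_coe_add_smul x y hi.1, norm_smul, hi.2, mul_one, Real.norm_eq_abs]

lemma isOpen_unitDisk : IsOpen unitDisk :=
  isOpen_lt (by fun_prop) continuous_const

lemma mem_unitDisk_neg_iff {x y : ℝ} : (x, -y) ∈ unitDisk ↔ (x, y) ∈ unitDisk := by
  simp [unitDisk]

lemma mem_unitDisk_of_mem_B4 {q : ℍ} (hq : q ∈ B4) : (q.re, ‖q.im‖) ∈ unitDisk := by
  have := (sq_lt_one_iff₀ (norm_nonneg q)).2 hq
  rwa [Quaternion.norm_sq_eq_re_sq_add_norm_im_sq] at this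

lemma coe_add_smul_mem_B4_iff {x y : ℝ} {i : ℍ} (hi : Sph2 i) :
    (x : ℍ) + y • i ∈ B4 ↔ (x, y) ∈ unitDisk := by
  rw [B4, Set.mem_ofPred_eq, ← sq_lt_one_iff₀ (norm_nonneg _),
    Quaternion.norm_sq_eq_re_sq_add_norm_im_sq, re_coe_add_smul x y hi.1,
    norm_im_coe_add_smul x y hi, sq_abs]
  rfl

lemma Imu_of_im_ne_zero {q : ℍ} (h : q.im ≠ 0) : Imu q = ‖q.im‖⁻¹ • q.im := if_neg h

lemma norm_Imu (q : ℍ) : ‖Imu q‖ = 1 := by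
  by_cases h : q.im = 0
  · rw [← pow_eq_one_iff_of_nonneg (norm_nonneg _) two_ne_zero, sq,
      ← Quaternion.normSq_eq_norm_mul_self, Quaternion.normSq_def']
    simp [Imu, h]
  · rw [Imu_of_im_ne_zero h, norm_smul, norm_inv, norm_norm, inv_mul_cancel₀ (norm_ne_zero_iff.2 h)]

lemma norm_im_smul_Imu (q : ℍ) : ‖q.im‖ • Imu q = q.im := by
  by_cases h : q.im = 0
  · rw [h, norm_zero, zero_smul]
  · rw [Imu_of_im_ne_zero h, smul_smul, mul_inv_cancel₀ (norm_ne_zero_iff.2 h), one_smul]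

lemma Imu_coe_add_smul {x y : ℝ} {i : ℍ} (hi : Sph2 i) (hy : y ≠ 0) :
    Imu ((x : ℍ) + y • i) = (|y|⁻¹ * y) • i := by
  have him := im_coe_add_smul x y hi.1
  rw [Imu_of_im_ne_zero (by rw [him]; exact smul_ne_zero hy hi.ne_zero),
    norm_im_coe_add_smul x y hi, him, smul_smul]

lemma pext_coe_add_smul (k : ℍ) (g : ℝ × ℝ → ℍ) {i : ℍ} (hi : Sph2 i) (x y : ℝ) :
    Pext k g ((x : ℍ) + y • i)
      = (2⁻¹ : ℝ) • ((1 + i * k) * g (x, -y) + (1 - i * k) * g (x, y)) := by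
  rw [Pext, re_coe_add_smul x y hi.1, norm_im_coe_add_smul x y hi]
  rcases lt_trichotomy y 0 with hy | rfl | hy
  · rw [Imu_coe_add_smul hi hy.ne, abs_of_neg hy, inv_neg, neg_mul, inv_mul_cancel₀ hy.ne,
      neg_one_smul, neg_neg, add_comm]
    noncomm_ring
  · simp only [abs_zero, neg_zero]
    noncomm_ring
  · rw [Imu_coe_add_smul hi hy.ne', abs_of_pos hy, inv_mul_cancel₀ hy.ne', one_smul]

lemma pext_coe (k : ℍ) (g : ℝ × ℝ → ℍ) (x : ℝ) : Pext k g x = g (x, 0) := by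
  rw [Pext, Quaternion.re_coe, Quaternion.im_coe, norm_zero, neg_zero, add_mul, sub_mul, one_mul]
  module

lemma pext_sub_affine (k : ℍ) (g : ℝ × ℝ → ℍ) (c : ℍ) (G : ℝ × ℝ →L[ℝ] ℍ) (x₀ : ℝ) (q : ℍ) :
    Pext k (fun p => g p - c - G (p - (x₀, 0))) q
      = Pext k g q - c - ((q.re - x₀) • G (1, 0) - q.im * (k * G (0, 1))) := by
  have hG : ∀ s t : ℝ, G (s, t) = s • G (1, 0) + t • G (0, 1) := fun s t => by
    rw [← map_smul, ← map_smul, ← map_add]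
    simp
  have hq : q.im * (k * G (0, 1)) = ‖q.im‖ • (Imu q * (k * G (0, 1))) := by
    rw [← smul_mul_assoc, norm_im_smul_Imu]
  simp only [Pext, Prod.mk_sub_mk, sub_zero]
  rw [hG _ (-_), hG _ ‖_‖, hq]
  simp only [mul_add, mul_sub, sub_mul, add_mul, one_mul, mul_smul_comm, mul_assoc]
  -- `module` cannot use `‖q.im‖` both as a scalar and inside the atoms `g (q.re, ±‖q.im‖)`
  generalize ‖q.im‖ = y
  module

lemma norm_pext_le (k : ℍ) (g : ℝ × ℝ → ℍ) (q : ℍ) :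
    ‖Pext k g q‖ ≤ (1 + ‖k‖) * (‖g (q.re, -‖q.im‖)‖ + ‖g (q.re, ‖q.im‖)‖) := by
  have hIk : ‖Imu q * k‖ = ‖k‖ := by rw [norm_mul, norm_Imu, one_mul]
  have h_plus : ‖1 + Imu q * k‖ ≤ 1 + ‖k‖ := (norm_add_le _ _).trans (by rw [norm_one, hIk])
  have h_minus : ‖1 - Imu q * k‖ ≤ 1 + ‖k‖ := (norm_sub_le _ _).trans (by rw [norm_one, hIk])
  rw [Pext, norm_smul]
  calc ‖(2⁻¹ : ℝ)‖ * ‖(1 + Imu q * k) * g (q.re, -‖q.im‖) + (1 - Imu q * k) * g (q.re, ‖q.im‖)‖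
      ≤ 1 * (‖1 + Imu q * k‖ * ‖g (q.re, -‖q.im‖)‖ + ‖1 - Imu q * k‖ * ‖g (q.re, ‖q.im‖)‖) := by
        gcongr
        · norm_num
        · exact (norm_add_le _ _).trans (add_le_add (norm_mul_le _ _) (norm_mul_le _ _))
    _ ≤ (1 + ‖k‖) * (‖g (q.re, -‖q.im‖)‖ + ‖g (q.re, ‖q.im‖)‖) := by
        rw [one_mul, mul_add]
        gcongr

lemma norm_prodMk_sub_le (q : ℍ) (x₀ : ℝ) {s : ℝ} (hs : |s| = ‖q.im‖) :
    ‖((q.re, s) : ℝ × ℝ) - (x₀, 0)‖ ≤ ‖q - x₀‖ := by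
  have hre := Quaternion.abs_re_le_norm (q - x₀)
  have him := Quaternion.norm_im_le_norm (q - x₀)
  rw [Quaternion.re_sub, Quaternion.re_coe] at hre
  rw [Quaternion.im_sub, Quaternion.im_coe, sub_zero] at him
  rw [Prod.mk_sub_mk, sub_zero, Prod.norm_def, Real.norm_eq_abs, Real.norm_eq_abs, hs]
  exact max_le hre him

lemma isLittleO_pext (k : ℍ) {R : ℝ × ℝ → ℍ} {x₀ : ℝ}
    (hR : R =o[𝓝 (x₀, 0)] fun p => p - (x₀, 0)) :
    (fun q => Pext k R q) =o[𝓝 (x₀ : ℍ)] fun q => q - x₀ := by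
  have h_minus := isLittleO_comp_of_norm_sub_le hR fun q =>
    norm_prodMk_sub_le q x₀ (s := -‖q.im‖) (by rw [abs_neg, abs_norm])
  have h_plus := isLittleO_comp_of_norm_sub_le hR fun q =>
    norm_prodMk_sub_le q x₀ (s := ‖q.im‖) (abs_norm _)
  refine IsBigO.trans_isLittleO (IsBigO.of_bound (1 + ‖k‖) (Eventually.of_forall fun q => ?_))
    (h_minus.norm_left.add h_plus.norm_left)
  rw [Real.norm_of_nonneg (by positivity)]
  exact norm_pext_le k R q

lemma hasFDerivAt_pext_coe (k : ℍ) {g : ℝ × ℝ → ℍ} {G : ℝ × ℝ →L[ℝ] ℍ} {x₀ : ℝ}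
    (hg : HasFDerivAt g G (x₀, 0)) :
    HasFDerivAt (Pext k g) (Quaternion.reCLM.smulRight (G (1, 0))
      - ((ContinuousLinearMap.mul ℝ ℍ).flip (k * G (0, 1))).comp Quaternion.imCLM) (x₀ : ℍ) := by
  rw [hasFDerivAt_iff_isLittleO]
  refine (isLittleO_pext k hg.isLittleO).congr_left fun q => ?_
  rw [pext_sub_affine, pext_coe]
  simp

lemma differentiableAt_pext_of_im_ne_zero (k : ℍ) {g : ℝ × ℝ → ℍ} {q : ℍ} (hq : q.im ≠ 0)
    (h_minus : DifferentiableAt ℝ g (q.re, -‖q.im‖))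
    (h_plus : DifferentiableAt ℝ g (q.re, ‖q.im‖)) :
    DifferentiableAt ℝ (Pext k g) q := by
  have hre : DifferentiableAt ℝ (fun p : ℍ => p.re) q := Quaternion.reCLM.differentiableAt
  have him : DifferentiableAt ℝ (fun p : ℍ => p.im) q := Quaternion.imCLM.differentiableAt
  have hnorm : DifferentiableAt ℝ (fun p : ℍ => ‖p.im‖) q := him.norm ℝ hq
  have heq : (fun p : ℍ => (2⁻¹ : ℝ) • ((1 + (‖p.im‖⁻¹ • p.im) * k) * g (p.re, -‖p.im‖)
      + (1 - (‖p.im‖⁻¹ • p.im) * k) * g (p.re, ‖p.im‖))) =ᶠ[𝓝 q] Pext k g := by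
    filter_upwards [Quaternion.imCLM.continuous.continuousAt.eventually_ne hq] with p hp
    rw [Pext, Imu_of_im_ne_zero hp]
  refine DifferentiableAt.congr_of_eventuallyEq ?_ heq.symm
  fun_prop (disch := simpa using hq)

lemma differentiableAt_pext (k : ℍ) {g : ℝ × ℝ → ℍ} (hg : ∀ p ∈ unitDisk, DifferentiableAt ℝ g p)
    {q : ℍ} (hq : q ∈ B4) : DifferentiableAt ℝ (Pext k g) q := by
  have hp := mem_unitDisk_of_mem_B4 hq
  by_cases him : q.im = 0
  · rw [him, norm_zero] at hp
    rw [← Quaternion.re_add_im q, him, add_zero]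
    exact (hasFDerivAt_pext_coe k (hg _ hp).hasFDerivAt).differentiableAt
  · exact differentiableAt_pext_of_im_ne_zero k him (hg _ (mem_unitDisk_neg_iff.2 hp)) (hg _ hp)

/-- Holomorphy of `g` for the complex structure on `ℍ` of left multiplication by `k`. -/
def SliceHolomorphicAt (k : ℍ) (g : ℝ × ℝ → ℍ) (p : ℝ × ℝ) : Prop :=
  DifferentiableAt ℝ g p ∧ fderiv ℝ g p (1, 0) + k * fderiv ℝ g p (0, 1) = 0

namespace SliceHolomorphicAt

variable {j k : ℍ} {g g₁ g₂ : ℝ × ℝ → ℍ} {p : ℝ × ℝ}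

lemma add (h₁ : SliceHolomorphicAt k g₁ p) (h₂ : SliceHolomorphicAt k g₂ p) :
    SliceHolomorphicAt k (fun q => g₁ q + g₂ q) p := by
  refine ⟨h₁.1.add h₂.1, ?_⟩
  rw [fderiv_fun_add h₁.1 h₂.1]
  simp only [add_apply, mul_add]
  linear_combination (norm := abel) h₁.2 + h₂.2

lemma const_smul (h : SliceHolomorphicAt k g p) (r : ℝ) :
    SliceHolomorphicAt k (fun q => r • g q) p := by
  refine ⟨h.1.const_smul r, ?_⟩
  rw [fderiv_fun_const_smul h.1]
  simp only [smul_apply, mul_smul_comm, ← smul_add, h.2, smul_zero]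

lemma const_mul (h : SliceHolomorphicAt k g p) {c : ℍ} (hc : j * c = c * k) :
    SliceHolomorphicAt j (fun q => c * g q) p := by
  refine ⟨h.1.const_mul c, ?_⟩
  rw [fderiv_const_mul h.1]
  simp only [smul_apply, smul_eq_mul, ← mul_assoc, hc]
  rw [mul_assoc, ← mul_add, h.2, mul_zero]

lemma mul_const (h : SliceHolomorphicAt k g p) (l : ℍ) :
    SliceHolomorphicAt k (fun q => g q * l) p := by
  refine ⟨h.1.mul_const l, ?_⟩
  rw [fderiv_mul_const' h.1]
  simp only [smul_apply, MulOpposite.smul_eq_mul_unop, MulOpposite.unop_op]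
  rw [← mul_assoc, ← add_mul, h.2, zero_mul]

lemma comp_reflect (h : SliceHolomorphicAt k g (p.1, -p.2)) :
    SliceHolomorphicAt (-k) (fun q => g (q.1, -q.2)) p := by
  let σ : ℝ × ℝ →L[ℝ] ℝ × ℝ := (ContinuousLinearMap.id ℝ ℝ).prodMap (-ContinuousLinearMap.id ℝ ℝ)
  have hσ : HasFDerivAt (fun q => g (q.1, -q.2)) ((fderiv ℝ g (p.1, -p.2)).comp σ) p :=
    h.1.hasFDerivAt.comp p σ.hasFDerivAt
  refine ⟨hσ.differentiableAt, ?_⟩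
  rw [hσ.fderiv]
  simp only [ContinuousLinearMap.comp_apply, ContinuousLinearMap.coe_prodMap',
    ContinuousLinearMap.coe_id', FunLike.coe_neg, Prod.map_apply, id_eq, Pi.neg_apply, neg_zero,
    neg_mul, σ]
  rw [show ((0 : ℝ), (-1 : ℝ)) = -(0, 1) by simp, map_neg, mul_neg, neg_neg, h.2]

lemma fderiv_add_mul_fderiv_eq_zero {f : ℍ → ℍ} {i : ℍ} {x y : ℝ}
    (hf : DifferentiableAt ℝ f ((x : ℍ) + y • i))
    (h : SliceHolomorphicAt i (fun p : ℝ × ℝ => f (p.1 + p.2 • i)) (x, y)) :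
    fderiv ℝ f ((x : ℍ) + y • i) 1 + i * fderiv ℝ f ((x : ℍ) + y • i) i = 0 := by
  let ι : ℝ × ℝ →L[ℝ] ℍ :=
    (ContinuousLinearMap.fst ℝ ℝ ℝ).smulRight 1 + (ContinuousLinearMap.snd ℝ ℝ ℝ).smulRight i
  have hι : ∀ p : ℝ × ℝ, ι p = (p.1 : ℍ) + p.2 • i := fun p => by
    simp [ι, Quaternion.coe_eq_smul_one]
  have hcomp : HasFDerivAt (fun p : ℝ × ℝ => f (p.1 + p.2 • i))
      ((fderiv ℝ f ((x : ℍ) + y • i)).comp ι) (x, y) := by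
    have hf' : HasFDerivAt f (fderiv ℝ f ((x : ℍ) + y • i)) (ι (x, y)) := by
      rw [hι]
      exact hf.hasFDerivAt
    simp only [← hι]
    exact hf'.comp (x, y) ι.hasFDerivAt
  have := h.2
  rw [hcomp.fderiv] at this
  simpa [hι] using this

end SliceHolomorphicAt

lemma sliceRegularOn_of_sliceHolomorphicAt {f : ℍ → ℍ} {Ω : Set ℍ}
    (hf : ∀ q ∈ Ω, DifferentiableAt ℝ f q)
    (h : ∀ ⦃i : ℍ⦄, Sph2 i → ∀ x y : ℝ, (x : ℍ) + y • i ∈ Ω →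
      SliceHolomorphicAt i (fun p : ℝ × ℝ => f (p.1 + p.2 • i)) (x, y)) :
    SliceRegularOn f Ω := fun _ hi x y hq =>
  ⟨hf _ hq, (h hi x y hq).fderiv_add_mul_fderiv_eq_zero (hf _ hq)⟩

lemma sliceHolomorphicAt_coe_add_smul {a b : ℝ × ℝ → ℝ} {k : ℍ} {p : ℝ × ℝ} (hk : k * k = -1)
    (ha : DifferentiableAt ℝ a p) (hb : DifferentiableAt ℝ b p)
    (hx : fderiv ℝ a p (1, 0) = fderiv ℝ b p (0, 1))
    (hy : fderiv ℝ a p (0, 1) = -fderiv ℝ b p (1, 0)) :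
    SliceHolomorphicAt k (fun q => (a q : ℍ) + b q • k) p := by
  have hderiv : HasFDerivAt (fun q => (a q : ℍ) + b q • k)
      ((fderiv ℝ a p).smulRight 1 + (fderiv ℝ b p).smulRight k) p := by
    simp only [Quaternion.coe_eq_smul_one]
    exact (ha.hasFDerivAt.smul_const 1).add (hb.hasFDerivAt.smul_const k)
  refine ⟨hderiv.differentiableAt, ?_⟩
  simp only [hderiv.fderiv, add_apply, ContinuousLinearMap.smulRight_apply, hx, hy, mul_add,
    mul_smul_comm, mul_one, hk]
  module

lemma sliceFun_eq (a b c d : ℝ × ℝ → ℝ) (k l : ℍ) :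
    sliceFun a b c d k l = fun p => ((a p : ℍ) + b p • k) + ((c p : ℍ) + d p • k) * l := by
  funext p
  simp only [sliceFun, add_mul, smul_mul_assoc, Quaternion.coe_mul_eq_smul, add_assoc]

lemma HarmonicOnDisk.differentiableAt {a : ℝ × ℝ → ℝ} (ha : HarmonicOnDisk a) {p : ℝ × ℝ}
    (hp : p ∈ unitDisk) : DifferentiableAt ℝ a p :=
  (ha.1.differentiableOn two_ne_zero).differentiableAt (isOpen_unitDisk.mem_nhds hp)

lemma ConjHarmPair.sliceHolomorphicAt {a b : ℝ × ℝ → ℝ} (hab : ConjHarmPair a b) {k : ℍ}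
    (hk : k * k = -1) {p : ℝ × ℝ} (hp : p ∈ unitDisk) :
    SliceHolomorphicAt k (fun q => (a q : ℍ) + b q • k) p :=
  sliceHolomorphicAt_coe_add_smul hk (hab.1.differentiableAt hp) (hab.2.1.differentiableAt hp)
    (hab.2.2 p hp).1 (hab.2.2 p hp).2

lemma sliceHolomorphicAt_sliceFun {a b c d : ℝ × ℝ → ℝ} {k : ℍ} (l : ℍ) (hk : k * k = -1)
    (hab : ConjHarmPair a b) (hcd : ConjHarmPair c d) {p : ℝ × ℝ} (hp : p ∈ unitDisk) :
    SliceHolomorphicAt k (sliceFun a b c d k l) p := by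
  rw [sliceFun_eq]
  exact (hab.sliceHolomorphicAt hk hp).add ((hcd.sliceHolomorphicAt hk hp).mul_const l)

lemma sliceHolomorphicAt_pext_comp_slice {i k : ℍ} {g : ℝ × ℝ → ℍ} (hi : Sph2 i)
    (hk : k * k = -1) {x y : ℝ} (h_minus : SliceHolomorphicAt k g (x, -y))
    (h_plus : SliceHolomorphicAt k g (x, y)) :
    SliceHolomorphicAt i (fun p : ℝ × ℝ => Pext k g (p.1 + p.2 • i)) (x, y) := by
  have hi2 := hi.mul_self_s8
  have hslice : (fun p : ℝ × ℝ => Pext k g (p.1 + p.2 • i))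
      = fun p => (2⁻¹ : ℝ) • ((1 + i * k) * g (p.1, -p.2) + (1 - i * k) * g p) := by
    funext p
    rw [pext_coe_add_smul k g hi]
  rw [hslice]
  refine ((SliceHolomorphicAt.comp_reflect (p := (x, y)) h_minus).const_mul ?_).add
    (h_plus.const_mul ?_) |>.const_smul _
  all_goals
    have hkk : ∀ w : ℍ, w * k * k = -w := fun w => by rw [mul_assoc, hk, mul_neg_one]
    simp only [mul_add, add_mul, mul_sub, sub_mul, mul_one, one_mul, mul_neg, neg_mul, ← mul_assoc,
      hi2, hkk]
    abel

/-- For conjugate harmonic pairs `(a,b), (c,d)` of finite `L²(D)` norm and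
`(k,l) ∈ T`, the function `P_{k,l}[a + bk + cl + dkl]` is slice regular on `𝔹⁴`. -/
theorem Pext_slice_regular (k l : ℍ) (hkl : OrthPair k l)
    (a b c d : ℝ × ℝ → ℝ) (hab : HLpair a b) (hcd : HLpair c d) :
    SliceRegularOn (Pext k (sliceFun a b c d k l)) B4 := by
  have hk : k * k = -1 := hkl.1.mul_self_s8
  have hg : ∀ p ∈ unitDisk, SliceHolomorphicAt k (sliceFun a b c d k l) p :=
    fun p hp => sliceHolomorphicAt_sliceFun l hk hab.1 hcd.1 hp
  refine sliceRegularOn_of_sliceHolomorphicAt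
    (fun q hq => differentiableAt_pext k (fun p hp => (hg p hp).1) hq) fun i hi x y hq => ?_
  rw [coe_add_smul_mem_B4_iff hi] at hq
  exact sliceHolomorphicAt_pext_comp_slice hi hk (hg _ (mem_unitDisk_neg_iff.2 hq)) (hg _ hq)
end
end
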